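/- Let c(n) denote the number of functions f : ZMod n → {Empty, Blue, Red} such that no two cyclically adjacent vertices receive the same non-Empty color. Then c(3) = 13, c(4) = 35, c(5) = 81, and c(n) = c(n-1) + 3·c(n-2) + c(n-3) for all n ≥ 6. -/

import Mathlib

inductive Color : Type
  | Empty | Blue | Red
  deriving DecidableEq

instance instFintypeColor : Fintype Color :=
  ⟨{Color.Empty, Color.Blue, Color.Red}, fun x => by cases x <;> simp⟩

/-- Number of Col positions on the cycle `C_n`: colorings of `ZMod n` where no
two cyclically adjacent vertices receive the same non-`Empty` color. -/
noncomputable def colCycle (n : ℕ) : ℕ :=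
  Nat.card {c : ZMod n → Color //
    ∀ i : ZMod n, ¬(c i ≠ Color.Empty ∧ c i = c (i + 1))}

/-!
A position on `C_n` is a closed walk of length `n` in the graph on colours whose edges are
the admissible neighbouring pairs, so `c(n) = tr Tⁿ` for its adjacency matrix `T`. Since
`T³ = T² + 3T + 1` (Cayley–Hamilton: `T` has characteristic polynomial
`(λ + 1)(λ² - 2λ - 1)`), the traces of the powers of `T` satisfy the stated recursion.
-/

theorem Fin.cons_add_one_eq_snoc {β : Type*} {m : ℕ} (a : β) (p : Fin m → β)
    (i : Fin (m + 1)) :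
    (Fin.cons a p : Fin (m + 1) → β) (i + 1) = Fin.snoc (α := fun _ => β) p a i := by
  induction i using Fin.lastCases with
  | last => simp
  | cast j => simp [Fin.coeSucc_eq_succ]

namespace Matrix

variable {α R : Type*} [Fintype α] [DecidableEq α] [CommSemiring R]

theorem pow_succ_apply_eq_sum_prod (M : Matrix α α R) (m : ℕ) (a b : α) :
    (M ^ (m + 1)) a b = ∑ p : Fin m → α, ∏ i : Fin (m + 1),
      M ((Fin.cons a p : Fin (m + 1) → α) i) ((Fin.snoc p b : Fin (m + 1) → α) i) := by
  induction m generalizing a with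
  | zero => simp [Fin.snoc]
  | succ m ih =>
    rw [pow_succ', mul_apply, ← (Fin.consEquiv fun _ => α).sum_comp, Fintype.sum_prod_type]
    refine Finset.sum_congr rfl fun x _ => ?_
    rw [ih, Finset.mul_sum]
    refine Finset.sum_congr rfl fun p _ => ?_
    simp [Fin.consEquiv, Fin.prod_univ_succ (n := m + 1), ← Fin.cons_snoc_eq_snoc_cons]

theorem trace_pow_succ_eq_sum_prod (M : Matrix α α R) (m : ℕ) :
    trace (M ^ (m + 1)) = ∑ c : Fin (m + 1) → α, ∏ i, M (c i) (c (i + 1)) := by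
  simp only [trace, diag, pow_succ_apply_eq_sum_prod]
  rw [← (Fin.consEquiv fun _ => α).sum_comp, Fintype.sum_prod_type]
  simp [Fin.consEquiv, Fin.cons_add_one_eq_snoc]

end Matrix

open Matrix

namespace Color

def transfer : Matrix Color Color ℕ := of fun a b => if ¬(a ≠ Empty ∧ a = b) then 1 else 0

theorem transfer_pow_three : transfer ^ 3 = transfer ^ 2 + 3 • transfer + 1 := by
  decide

theorem trace_transfer_pow_add_three (n : ℕ) :
    trace (transfer ^ (n + 3)) =
      trace (transfer ^ (n + 2)) + 3 * trace (transfer ^ (n + 1)) + trace (transfer ^ n) := by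
  rw [pow_add, transfer_pow_three, mul_add, mul_add, mul_smul_comm, mul_one, ← pow_add,
    ← pow_succ, trace_add, trace_add, trace_smul, smul_eq_mul]

end Color

-- Fails for `m + 1 = 0`: `ZMod 0 = ℤ`, so `colCycle 0 = Nat.card _ = 0` while `tr T⁰ = 3`.
theorem colCycle_succ_eq_trace (m : ℕ) : colCycle (m + 1) = trace (Color.transfer ^ (m + 1)) := by
  rw [trace_pow_succ_eq_sum_prod]
  change Nat.card {c : Fin (m + 1) → Color // ∀ i, ¬(c i ≠ .Empty ∧ c i = c (i + 1))} = _
  simp only [Color.transfer, of_apply, Finset.prod_boole, Finset.mem_univ, forall_const,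
    Finset.sum_boole, Nat.card_eq_fintype_card, Fintype.card_subtype, Nat.cast_id]

theorem colCycle_add_four (n : ℕ) :
    colCycle (n + 4) = colCycle (n + 3) + 3 * colCycle (n + 2) + colCycle (n + 1) := by
  simp only [colCycle_succ_eq_trace]
  exact Color.trace_transfer_pow_add_three (n + 1)

theorem colCycle_recursion :
    colCycle 3 = 13 ∧ colCycle 4 = 35 ∧ colCycle 5 = 81 ∧
    ∀ n : ℕ, 6 ≤ n →
      colCycle n = colCycle (n - 1) + 3 * colCycle (n - 2) + colCycle (n - 3) := by
  refine ⟨(colCycle_succ_eq_trace 2).trans (by decide),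
    (colCycle_succ_eq_trace 3).trans (by decide),
    (colCycle_succ_eq_trace 4).trans (by decide), fun n hn => ?_⟩
  obtain ⟨k, rfl⟩ : ∃ k, n = k + 6 := ⟨n - 6, by omega⟩
  simpa using colCycle_add_four (k + 2)
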